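/- Let E_A > E_B > 0 and T_A, T_B > 0 with E_A/T_A < E_B/T_B. Let ρ = γ_{T_A} ⊗ γ_{T_B} on ℂ² ⊗ ℂ², where γ_{T_A} = diag(1, e^{−E_A/T_A})/(1 + e^{−E_A/T_A}) and γ_{T_B} = diag(1, e^{−E_B/T_B})/(1 + e^{−E_B/T_B}), and let H = diag(0,E_A) ⊗ I₂ + I₂ ⊗ diag(0,E_B). Let S be the SWAP unitary, S(x ⊗ y) = y ⊗ x. Then for every 4×4 unitary U: tr(U ρ U† H) ≥ tr(S ρ S† H). That is, SWAP is an optimal heat engine on this pair of two-level systems. -/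
import Mathlib

open Kronecker

/-- The Gibbs state of a two-level system with energy gap `E` at temperature
`T`: the diagonal matrix `diag(1, e^{-E/T}) / (1 + e^{-E/T})`. -/
noncomputable def qubitGibbs (E T : ℝ) : Matrix (Fin 2) (Fin 2) ℂ :=
  Matrix.diagonal fun i =>
    (((if i = 0 then 1 else Real.exp (-E / T)) / (1 + Real.exp (-E / T)) : ℝ) : ℂ)

/-- The Hamiltonian `diag(0, E)` of a two-level system with gap `E`. -/
noncomputable def qubitHam (E : ℝ) : Matrix (Fin 2) (Fin 2) ℂ :=
  Matrix.diagonal fun i => (if i = 0 then 0 else (E : ℂ))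

/-- The SWAP unitary on `ℂ² ⊗ ℂ²`, `S (x ⊗ y) = y ⊗ x`. -/
def swapGate : Matrix (Fin 2 × Fin 2) (Fin 2 × Fin 2) ℂ :=
  Matrix.of fun p q => if p.1 = q.2 ∧ p.2 = q.1 then 1 else 0

set_option maxHeartbeats 1000000 in
lemma key (x y E_A E_B : ℝ) (hy : 0 < y) (hyx : y < x) (hx1 : x < 1)
    (hEB : 0 < E_B) (hE : E_B < E_A)
    (B : Fin 2 × Fin 2 → Fin 2 × Fin 2 → ℝ)
    (hBnn : ∀ p q, 0 ≤ B p q)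
    (hrow : ∀ p, B p (0,0) + B p (0,1) + B p (1,0) + B p (1,1) = 1)
    (hcol : ∀ q, B (0,0) q + B (0,1) q + B (1,0) q + B (1,1) q = 1) :
    E_B*x + E_A*y + (E_A+E_B)*(x*y) ≤
      0*1*B (0,0) (0,0) + 0*y*B (0,0) (0,1) + 0*x*B (0,0) (1,0) + 0*(x*y)*B (0,0) (1,1) + E_B*1*B (0,1) (0,0) + E_B*y*B (0,1) (0,1) + E_B*x*B (0,1) (1,0) + E_B*(x*y)*B (0,1) (1,1) + E_A*1*B (1,0) (0,0) + E_A*y*B (1,0) (0,1) + E_A*x*B (1,0) (1,0) + E_A*(x*y)*B (1,0) (1,1) + (E_A+E_B)*1*B (1,1) (0,0) + (E_A+E_B)*y*B (1,1) (0,1) + (E_A+E_B)*x*B (1,1) (1,0) + (E_A+E_B)*(x*y)*B (1,1) (1,1) := by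
  have h00 : (0+(0)) * B (0,0) (0,0) ≤ 0*1*B (0,0) (0,0) := by
    have c : ((0:ℝ)+(0)) ≤ 0*1 := by nlinarith [mul_pos hEB hy, mul_pos hy (sub_pos.2 hyx), mul_pos (sub_pos.2 hE) (sub_pos.2 hyx), mul_pos hEB (mul_pos hy (sub_pos.2 hx1)), mul_pos (sub_pos.2 hE) (mul_pos hy (sub_pos.2 hx1)), mul_pos hEB (sub_pos.2 hyx)]
    exact mul_le_mul_of_nonneg_right c (hBnn (0,0) (0,0))
  have h01 : (0+(E_B*(y-x))) * B (0,0) (0,1) ≤ 0*y*B (0,0) (0,1) := by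
    have c : ((0:ℝ)+(E_B*(y-x))) ≤ 0*y := by nlinarith [mul_pos hEB hy, mul_pos hy (sub_pos.2 hyx), mul_pos (sub_pos.2 hE) (sub_pos.2 hyx), mul_pos hEB (mul_pos hy (sub_pos.2 hx1)), mul_pos (sub_pos.2 hE) (mul_pos hy (sub_pos.2 hx1)), mul_pos hEB (sub_pos.2 hyx)]
    exact mul_le_mul_of_nonneg_right c (hBnn (0,0) (0,1))
  have h02 : (0+(0)) * B (0,0) (1,0) ≤ 0*x*B (0,0) (1,0) := by
    have c : ((0:ℝ)+(0)) ≤ 0*x := by nlinarith [mul_pos hEB hy, mul_pos hy (sub_pos.2 hyx), mul_pos (sub_pos.2 hE) (sub_pos.2 hyx), mul_pos hEB (mul_pos hy (sub_pos.2 hx1)), mul_pos (sub_pos.2 hE) (mul_pos hy (sub_pos.2 hx1)), mul_pos hEB (sub_pos.2 hyx)]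
    exact mul_le_mul_of_nonneg_right c (hBnn (0,0) (1,0))
  have h03 : (0+(E_A*y*(x-1)+E_B*(y-x))) * B (0,0) (1,1) ≤ 0*(x*y)*B (0,0) (1,1) := by
    have c : ((0:ℝ)+(E_A*y*(x-1)+E_B*(y-x))) ≤ 0*(x*y) := by nlinarith [mul_pos hEB hy, mul_pos hy (sub_pos.2 hyx), mul_pos (sub_pos.2 hE) (sub_pos.2 hyx), mul_pos hEB (mul_pos hy (sub_pos.2 hx1)), mul_pos (sub_pos.2 hE) (mul_pos hy (sub_pos.2 hx1)), mul_pos hEB (sub_pos.2 hyx)]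
    exact mul_le_mul_of_nonneg_right c (hBnn (0,0) (1,1))
  have h10 : (x*E_B+(0)) * B (0,1) (0,0) ≤ E_B*1*B (0,1) (0,0) := by
    have c : ((x*E_B:ℝ)+(0)) ≤ E_B*1 := by nlinarith [mul_pos hEB hy, mul_pos hy (sub_pos.2 hyx), mul_pos (sub_pos.2 hE) (sub_pos.2 hyx), mul_pos hEB (mul_pos hy (sub_pos.2 hx1)), mul_pos (sub_pos.2 hE) (mul_pos hy (sub_pos.2 hx1)), mul_pos hEB (sub_pos.2 hyx)]
    exact mul_le_mul_of_nonneg_right c (hBnn (0,1) (0,0))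
  have h11 : (x*E_B+(E_B*(y-x))) * B (0,1) (0,1) ≤ E_B*y*B (0,1) (0,1) := by
    have c : ((x*E_B:ℝ)+(E_B*(y-x))) ≤ E_B*y := by nlinarith [mul_pos hEB hy, mul_pos hy (sub_pos.2 hyx), mul_pos (sub_pos.2 hE) (sub_pos.2 hyx), mul_pos hEB (mul_pos hy (sub_pos.2 hx1)), mul_pos (sub_pos.2 hE) (mul_pos hy (sub_pos.2 hx1)), mul_pos hEB (sub_pos.2 hyx)]
    exact mul_le_mul_of_nonneg_right c (hBnn (0,1) (0,1))
  have h12 : (x*E_B+(0)) * B (0,1) (1,0) ≤ E_B*x*B (0,1) (1,0) := by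
    have c : ((x*E_B:ℝ)+(0)) ≤ E_B*x := by nlinarith [mul_pos hEB hy, mul_pos hy (sub_pos.2 hyx), mul_pos (sub_pos.2 hE) (sub_pos.2 hyx), mul_pos hEB (mul_pos hy (sub_pos.2 hx1)), mul_pos (sub_pos.2 hE) (mul_pos hy (sub_pos.2 hx1)), mul_pos hEB (sub_pos.2 hyx)]
    exact mul_le_mul_of_nonneg_right c (hBnn (0,1) (1,0))
  have h13 : (x*E_B+(E_A*y*(x-1)+E_B*(y-x))) * B (0,1) (1,1) ≤ E_B*(x*y)*B (0,1) (1,1) := by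
    have c : ((x*E_B:ℝ)+(E_A*y*(x-1)+E_B*(y-x))) ≤ E_B*(x*y) := by nlinarith [mul_pos hEB hy, mul_pos hy (sub_pos.2 hyx), mul_pos (sub_pos.2 hE) (sub_pos.2 hyx), mul_pos hEB (mul_pos hy (sub_pos.2 hx1)), mul_pos (sub_pos.2 hE) (mul_pos hy (sub_pos.2 hx1)), mul_pos hEB (sub_pos.2 hyx)]
    exact mul_le_mul_of_nonneg_right c (hBnn (0,1) (1,1))
  have h20 : (x*E_B+y*(E_A-E_B)+(0)) * B (1,0) (0,0) ≤ E_A*1*B (1,0) (0,0) := by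
    have c : ((x*E_B+y*(E_A-E_B):ℝ)+(0)) ≤ E_A*1 := by nlinarith [mul_pos hEB hy, mul_pos hy (sub_pos.2 hyx), mul_pos (sub_pos.2 hE) (sub_pos.2 hyx), mul_pos hEB (mul_pos hy (sub_pos.2 hx1)), mul_pos (sub_pos.2 hE) (mul_pos hy (sub_pos.2 hx1)), mul_pos hEB (sub_pos.2 hyx)]
    exact mul_le_mul_of_nonneg_right c (hBnn (1,0) (0,0))
  have h21 : (x*E_B+y*(E_A-E_B)+(E_B*(y-x))) * B (1,0) (0,1) ≤ E_A*y*B (1,0) (0,1) := by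
    have c : ((x*E_B+y*(E_A-E_B):ℝ)+(E_B*(y-x))) ≤ E_A*y := by nlinarith [mul_pos hEB hy, mul_pos hy (sub_pos.2 hyx), mul_pos (sub_pos.2 hE) (sub_pos.2 hyx), mul_pos hEB (mul_pos hy (sub_pos.2 hx1)), mul_pos (sub_pos.2 hE) (mul_pos hy (sub_pos.2 hx1)), mul_pos hEB (sub_pos.2 hyx)]
    exact mul_le_mul_of_nonneg_right c (hBnn (1,0) (0,1))
  have h22 : (x*E_B+y*(E_A-E_B)+(0)) * B (1,0) (1,0) ≤ E_A*x*B (1,0) (1,0) := by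
    have c : ((x*E_B+y*(E_A-E_B):ℝ)+(0)) ≤ E_A*x := by nlinarith [mul_pos hEB hy, mul_pos hy (sub_pos.2 hyx), mul_pos (sub_pos.2 hE) (sub_pos.2 hyx), mul_pos hEB (mul_pos hy (sub_pos.2 hx1)), mul_pos (sub_pos.2 hE) (mul_pos hy (sub_pos.2 hx1)), mul_pos hEB (sub_pos.2 hyx)]
    exact mul_le_mul_of_nonneg_right c (hBnn (1,0) (1,0))
  have h23 : (x*E_B+y*(E_A-E_B)+(E_A*y*(x-1)+E_B*(y-x))) * B (1,0) (1,1) ≤ E_A*(x*y)*B (1,0) (1,1) := by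
    have c : ((x*E_B+y*(E_A-E_B):ℝ)+(E_A*y*(x-1)+E_B*(y-x))) ≤ E_A*(x*y) := by nlinarith [mul_pos hEB hy, mul_pos hy (sub_pos.2 hyx), mul_pos (sub_pos.2 hE) (sub_pos.2 hyx), mul_pos hEB (mul_pos hy (sub_pos.2 hx1)), mul_pos (sub_pos.2 hE) (mul_pos hy (sub_pos.2 hx1)), mul_pos hEB (sub_pos.2 hyx)]
    exact mul_le_mul_of_nonneg_right c (hBnn (1,0) (1,1))
  have h30 : (x*E_B+y*(E_A-E_B)+x*y*E_B+(0)) * B (1,1) (0,0) ≤ (E_A+E_B)*1*B (1,1) (0,0) := by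
    have c : ((x*E_B+y*(E_A-E_B)+x*y*E_B:ℝ)+(0)) ≤ (E_A+E_B)*1 := by nlinarith [mul_pos hEB hy, mul_pos hy (sub_pos.2 hyx), mul_pos (sub_pos.2 hE) (sub_pos.2 hyx), mul_pos hEB (mul_pos hy (sub_pos.2 hx1)), mul_pos (sub_pos.2 hE) (mul_pos hy (sub_pos.2 hx1)), mul_pos hEB (sub_pos.2 hyx)]
    exact mul_le_mul_of_nonneg_right c (hBnn (1,1) (0,0))
  have h31 : (x*E_B+y*(E_A-E_B)+x*y*E_B+(E_B*(y-x))) * B (1,1) (0,1) ≤ (E_A+E_B)*y*B (1,1) (0,1) := by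
    have c : ((x*E_B+y*(E_A-E_B)+x*y*E_B:ℝ)+(E_B*(y-x))) ≤ (E_A+E_B)*y := by nlinarith [mul_pos hEB hy, mul_pos hy (sub_pos.2 hyx), mul_pos (sub_pos.2 hE) (sub_pos.2 hyx), mul_pos hEB (mul_pos hy (sub_pos.2 hx1)), mul_pos (sub_pos.2 hE) (mul_pos hy (sub_pos.2 hx1)), mul_pos hEB (sub_pos.2 hyx)]
    exact mul_le_mul_of_nonneg_right c (hBnn (1,1) (0,1))
  have h32 : (x*E_B+y*(E_A-E_B)+x*y*E_B+(0)) * B (1,1) (1,0) ≤ (E_A+E_B)*x*B (1,1) (1,0) := by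
    have c : ((x*E_B+y*(E_A-E_B)+x*y*E_B:ℝ)+(0)) ≤ (E_A+E_B)*x := by nlinarith [mul_pos hEB hy, mul_pos hy (sub_pos.2 hyx), mul_pos (sub_pos.2 hE) (sub_pos.2 hyx), mul_pos hEB (mul_pos hy (sub_pos.2 hx1)), mul_pos (sub_pos.2 hE) (mul_pos hy (sub_pos.2 hx1)), mul_pos hEB (sub_pos.2 hyx)]
    exact mul_le_mul_of_nonneg_right c (hBnn (1,1) (1,0))
  have h33 : (x*E_B+y*(E_A-E_B)+x*y*E_B+(E_A*y*(x-1)+E_B*(y-x))) * B (1,1) (1,1) ≤ (E_A+E_B)*(x*y)*B (1,1) (1,1) := by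
    have c : ((x*E_B+y*(E_A-E_B)+x*y*E_B:ℝ)+(E_A*y*(x-1)+E_B*(y-x))) ≤ (E_A+E_B)*(x*y) := by nlinarith [mul_pos hEB hy, mul_pos hy (sub_pos.2 hyx), mul_pos (sub_pos.2 hE) (sub_pos.2 hyx), mul_pos hEB (mul_pos hy (sub_pos.2 hx1)), mul_pos (sub_pos.2 hE) (mul_pos hy (sub_pos.2 hx1)), mul_pos hEB (sub_pos.2 hyx)]
    exact mul_le_mul_of_nonneg_right c (hBnn (1,1) (1,1))
  have hr0 : x*E_B*(B (0,0) (0,0)) + x*E_B*(B (0,0) (0,1)) + x*E_B*(B (0,0) (1,0)) + x*E_B*(B (0,0) (1,1)) = x*E_B := by linear_combination (x*E_B) * hrow (0,0)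
  have hc0 : x*E_B*(B (0,0) (0,0)) + x*E_B*(B (0,1) (0,0)) + x*E_B*(B (1,0) (0,0)) + x*E_B*(B (1,1) (0,0)) = x*E_B := by linear_combination (x*E_B) * hcol (0,0)
  have hr1 : x*E_B*(B (0,1) (0,0)) + x*E_B*(B (0,1) (0,1)) + x*E_B*(B (0,1) (1,0)) + x*E_B*(B (0,1) (1,1)) = x*E_B := by linear_combination (x*E_B) * hrow (0,1)
  have hc1 : x*E_B*(B (0,0) (0,1)) + x*E_B*(B (0,1) (0,1)) + x*E_B*(B (1,0) (0,1)) + x*E_B*(B (1,1) (0,1)) = x*E_B := by linear_combination (x*E_B) * hcol (0,1)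
  have hr2 : x*E_B*(B (1,0) (0,0)) + x*E_B*(B (1,0) (0,1)) + x*E_B*(B (1,0) (1,0)) + x*E_B*(B (1,0) (1,1)) = x*E_B := by linear_combination (x*E_B) * hrow (1,0)
  have hc2 : x*E_B*(B (0,0) (1,0)) + x*E_B*(B (0,1) (1,0)) + x*E_B*(B (1,0) (1,0)) + x*E_B*(B (1,1) (1,0)) = x*E_B := by linear_combination (x*E_B) * hcol (1,0)
  have hr3 : x*E_B*(B (1,1) (0,0)) + x*E_B*(B (1,1) (0,1)) + x*E_B*(B (1,1) (1,0)) + x*E_B*(B (1,1) (1,1)) = x*E_B := by linear_combination (x*E_B) * hrow (1,1)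
  have hc3 : x*E_B*(B (0,0) (1,1)) + x*E_B*(B (0,1) (1,1)) + x*E_B*(B (1,0) (1,1)) + x*E_B*(B (1,1) (1,1)) = x*E_B := by linear_combination (x*E_B) * hcol (1,1)
  have hr4 : y*E_A*(B (0,0) (0,0)) + y*E_A*(B (0,0) (0,1)) + y*E_A*(B (0,0) (1,0)) + y*E_A*(B (0,0) (1,1)) = y*E_A := by linear_combination (y*E_A) * hrow (0,0)
  have hc4 : y*E_A*(B (0,0) (0,0)) + y*E_A*(B (0,1) (0,0)) + y*E_A*(B (1,0) (0,0)) + y*E_A*(B (1,1) (0,0)) = y*E_A := by linear_combination (y*E_A) * hcol (0,0)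
  have hr5 : y*E_A*(B (0,1) (0,0)) + y*E_A*(B (0,1) (0,1)) + y*E_A*(B (0,1) (1,0)) + y*E_A*(B (0,1) (1,1)) = y*E_A := by linear_combination (y*E_A) * hrow (0,1)
  have hc5 : y*E_A*(B (0,0) (0,1)) + y*E_A*(B (0,1) (0,1)) + y*E_A*(B (1,0) (0,1)) + y*E_A*(B (1,1) (0,1)) = y*E_A := by linear_combination (y*E_A) * hcol (0,1)
  have hr6 : y*E_A*(B (1,0) (0,0)) + y*E_A*(B (1,0) (0,1)) + y*E_A*(B (1,0) (1,0)) + y*E_A*(B (1,0) (1,1)) = y*E_A := by linear_combination (y*E_A) * hrow (1,0)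
  have hc6 : y*E_A*(B (0,0) (1,0)) + y*E_A*(B (0,1) (1,0)) + y*E_A*(B (1,0) (1,0)) + y*E_A*(B (1,1) (1,0)) = y*E_A := by linear_combination (y*E_A) * hcol (1,0)
  have hr7 : y*E_A*(B (1,1) (0,0)) + y*E_A*(B (1,1) (0,1)) + y*E_A*(B (1,1) (1,0)) + y*E_A*(B (1,1) (1,1)) = y*E_A := by linear_combination (y*E_A) * hrow (1,1)
  have hc7 : y*E_A*(B (0,0) (1,1)) + y*E_A*(B (0,1) (1,1)) + y*E_A*(B (1,0) (1,1)) + y*E_A*(B (1,1) (1,1)) = y*E_A := by linear_combination (y*E_A) * hcol (1,1)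
  have hr8 : y*E_B*(B (0,0) (0,0)) + y*E_B*(B (0,0) (0,1)) + y*E_B*(B (0,0) (1,0)) + y*E_B*(B (0,0) (1,1)) = y*E_B := by linear_combination (y*E_B) * hrow (0,0)
  have hc8 : y*E_B*(B (0,0) (0,0)) + y*E_B*(B (0,1) (0,0)) + y*E_B*(B (1,0) (0,0)) + y*E_B*(B (1,1) (0,0)) = y*E_B := by linear_combination (y*E_B) * hcol (0,0)
  have hr9 : y*E_B*(B (0,1) (0,0)) + y*E_B*(B (0,1) (0,1)) + y*E_B*(B (0,1) (1,0)) + y*E_B*(B (0,1) (1,1)) = y*E_B := by linear_combination (y*E_B) * hrow (0,1)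
  have hc9 : y*E_B*(B (0,0) (0,1)) + y*E_B*(B (0,1) (0,1)) + y*E_B*(B (1,0) (0,1)) + y*E_B*(B (1,1) (0,1)) = y*E_B := by linear_combination (y*E_B) * hcol (0,1)
  have hr10 : y*E_B*(B (1,0) (0,0)) + y*E_B*(B (1,0) (0,1)) + y*E_B*(B (1,0) (1,0)) + y*E_B*(B (1,0) (1,1)) = y*E_B := by linear_combination (y*E_B) * hrow (1,0)
  have hc10 : y*E_B*(B (0,0) (1,0)) + y*E_B*(B (0,1) (1,0)) + y*E_B*(B (1,0) (1,0)) + y*E_B*(B (1,1) (1,0)) = y*E_B := by linear_combination (y*E_B) * hcol (1,0)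
  have hr11 : y*E_B*(B (1,1) (0,0)) + y*E_B*(B (1,1) (0,1)) + y*E_B*(B (1,1) (1,0)) + y*E_B*(B (1,1) (1,1)) = y*E_B := by linear_combination (y*E_B) * hrow (1,1)
  have hc11 : y*E_B*(B (0,0) (1,1)) + y*E_B*(B (0,1) (1,1)) + y*E_B*(B (1,0) (1,1)) + y*E_B*(B (1,1) (1,1)) = y*E_B := by linear_combination (y*E_B) * hcol (1,1)
  have hr12 : x*y*E_B*(B (0,0) (0,0)) + x*y*E_B*(B (0,0) (0,1)) + x*y*E_B*(B (0,0) (1,0)) + x*y*E_B*(B (0,0) (1,1)) = x*y*E_B := by linear_combination (x*y*E_B) * hrow (0,0)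
  have hc12 : x*y*E_B*(B (0,0) (0,0)) + x*y*E_B*(B (0,1) (0,0)) + x*y*E_B*(B (1,0) (0,0)) + x*y*E_B*(B (1,1) (0,0)) = x*y*E_B := by linear_combination (x*y*E_B) * hcol (0,0)
  have hr13 : x*y*E_B*(B (0,1) (0,0)) + x*y*E_B*(B (0,1) (0,1)) + x*y*E_B*(B (0,1) (1,0)) + x*y*E_B*(B (0,1) (1,1)) = x*y*E_B := by linear_combination (x*y*E_B) * hrow (0,1)
  have hc13 : x*y*E_B*(B (0,0) (0,1)) + x*y*E_B*(B (0,1) (0,1)) + x*y*E_B*(B (1,0) (0,1)) + x*y*E_B*(B (1,1) (0,1)) = x*y*E_B := by linear_combination (x*y*E_B) * hcol (0,1)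
  have hr14 : x*y*E_B*(B (1,0) (0,0)) + x*y*E_B*(B (1,0) (0,1)) + x*y*E_B*(B (1,0) (1,0)) + x*y*E_B*(B (1,0) (1,1)) = x*y*E_B := by linear_combination (x*y*E_B) * hrow (1,0)
  have hc14 : x*y*E_B*(B (0,0) (1,0)) + x*y*E_B*(B (0,1) (1,0)) + x*y*E_B*(B (1,0) (1,0)) + x*y*E_B*(B (1,1) (1,0)) = x*y*E_B := by linear_combination (x*y*E_B) * hcol (1,0)
  have hr15 : x*y*E_B*(B (1,1) (0,0)) + x*y*E_B*(B (1,1) (0,1)) + x*y*E_B*(B (1,1) (1,0)) + x*y*E_B*(B (1,1) (1,1)) = x*y*E_B := by linear_combination (x*y*E_B) * hrow (1,1)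
  have hc15 : x*y*E_B*(B (0,0) (1,1)) + x*y*E_B*(B (0,1) (1,1)) + x*y*E_B*(B (1,0) (1,1)) + x*y*E_B*(B (1,1) (1,1)) = x*y*E_B := by linear_combination (x*y*E_B) * hcol (1,1)
  have hr16 : x*y*E_A*(B (0,0) (0,0)) + x*y*E_A*(B (0,0) (0,1)) + x*y*E_A*(B (0,0) (1,0)) + x*y*E_A*(B (0,0) (1,1)) = x*y*E_A := by linear_combination (x*y*E_A) * hrow (0,0)
  have hc16 : x*y*E_A*(B (0,0) (0,0)) + x*y*E_A*(B (0,1) (0,0)) + x*y*E_A*(B (1,0) (0,0)) + x*y*E_A*(B (1,1) (0,0)) = x*y*E_A := by linear_combination (x*y*E_A) * hcol (0,0)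
  have hr17 : x*y*E_A*(B (0,1) (0,0)) + x*y*E_A*(B (0,1) (0,1)) + x*y*E_A*(B (0,1) (1,0)) + x*y*E_A*(B (0,1) (1,1)) = x*y*E_A := by linear_combination (x*y*E_A) * hrow (0,1)
  have hc17 : x*y*E_A*(B (0,0) (0,1)) + x*y*E_A*(B (0,1) (0,1)) + x*y*E_A*(B (1,0) (0,1)) + x*y*E_A*(B (1,1) (0,1)) = x*y*E_A := by linear_combination (x*y*E_A) * hcol (0,1)
  have hr18 : x*y*E_A*(B (1,0) (0,0)) + x*y*E_A*(B (1,0) (0,1)) + x*y*E_A*(B (1,0) (1,0)) + x*y*E_A*(B (1,0) (1,1)) = x*y*E_A := by linear_combination (x*y*E_A) * hrow (1,0)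
  have hc18 : x*y*E_A*(B (0,0) (1,0)) + x*y*E_A*(B (0,1) (1,0)) + x*y*E_A*(B (1,0) (1,0)) + x*y*E_A*(B (1,1) (1,0)) = x*y*E_A := by linear_combination (x*y*E_A) * hcol (1,0)
  have hr19 : x*y*E_A*(B (1,1) (0,0)) + x*y*E_A*(B (1,1) (0,1)) + x*y*E_A*(B (1,1) (1,0)) + x*y*E_A*(B (1,1) (1,1)) = x*y*E_A := by linear_combination (x*y*E_A) * hrow (1,1)
  have hc19 : x*y*E_A*(B (0,0) (1,1)) + x*y*E_A*(B (0,1) (1,1)) + x*y*E_A*(B (1,0) (1,1)) + x*y*E_A*(B (1,1) (1,1)) = x*y*E_A := by linear_combination (x*y*E_A) * hcol (1,1)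
  have hr20 : x*E_A*(B (0,0) (0,0)) + x*E_A*(B (0,0) (0,1)) + x*E_A*(B (0,0) (1,0)) + x*E_A*(B (0,0) (1,1)) = x*E_A := by linear_combination (x*E_A) * hrow (0,0)
  have hc20 : x*E_A*(B (0,0) (0,0)) + x*E_A*(B (0,1) (0,0)) + x*E_A*(B (1,0) (0,0)) + x*E_A*(B (1,1) (0,0)) = x*E_A := by linear_combination (x*E_A) * hcol (0,0)
  have hr21 : x*E_A*(B (0,1) (0,0)) + x*E_A*(B (0,1) (0,1)) + x*E_A*(B (0,1) (1,0)) + x*E_A*(B (0,1) (1,1)) = x*E_A := by linear_combination (x*E_A) * hrow (0,1)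
  have hc21 : x*E_A*(B (0,0) (0,1)) + x*E_A*(B (0,1) (0,1)) + x*E_A*(B (1,0) (0,1)) + x*E_A*(B (1,1) (0,1)) = x*E_A := by linear_combination (x*E_A) * hcol (0,1)
  have hr22 : x*E_A*(B (1,0) (0,0)) + x*E_A*(B (1,0) (0,1)) + x*E_A*(B (1,0) (1,0)) + x*E_A*(B (1,0) (1,1)) = x*E_A := by linear_combination (x*E_A) * hrow (1,0)
  have hc22 : x*E_A*(B (0,0) (1,0)) + x*E_A*(B (0,1) (1,0)) + x*E_A*(B (1,0) (1,0)) + x*E_A*(B (1,1) (1,0)) = x*E_A := by linear_combination (x*E_A) * hcol (1,0)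
  have hr23 : x*E_A*(B (1,1) (0,0)) + x*E_A*(B (1,1) (0,1)) + x*E_A*(B (1,1) (1,0)) + x*E_A*(B (1,1) (1,1)) = x*E_A := by linear_combination (x*E_A) * hrow (1,1)
  have hc23 : x*E_A*(B (0,0) (1,1)) + x*E_A*(B (0,1) (1,1)) + x*E_A*(B (1,0) (1,1)) + x*E_A*(B (1,1) (1,1)) = x*E_A := by linear_combination (x*E_A) * hcol (1,1)
  linarith [h00,h01,h02,h03,h10,h11,h12,h13,h20,h21,h22,h23,h30,h31,h32,h33,hr0,hc0,hr1,hc1,hr2,hc2,hr3,hc3,hr4,hc4,hr5,hc5,hr6,hc6,hr7,hc7,hr8,hc8,hr9,hc9,hr10,hc10,hr11,hc11,hr12,hc12,hr13,hc13,hr14,hc14,hr15,hc15,hr16,hc16,hr17,hc17,hr18,hc18,hr19,hc19,hr20,hc20,hr21,hc21,hr22,hc22,hr23,hc23]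

lemma trace_expand (U : Matrix (Fin 2 × Fin 2) (Fin 2 × Fin 2) ℂ) (d h : (Fin 2 × Fin 2) → ℂ) :
    Matrix.trace (U * Matrix.diagonal d * star U * Matrix.diagonal h)
      = ∑ p, ∑ q, h p * d q * (U p q * star (U p q)) := by
  simp only [Matrix.trace, Matrix.diag, Matrix.mul_apply, Matrix.diagonal_apply,
    Matrix.star_apply, Finset.sum_ite_eq, Finset.sum_ite_eq', Finset.mem_univ, if_true,
    Finset.sum_mul, Finset.mul_sum, mul_ite, ite_mul, mul_zero, zero_mul]
  apply Finset.sum_congr rfl; intro p _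
  apply Finset.sum_congr rfl; intro q _
  ring

lemma re_trace (U : Matrix (Fin 2 × Fin 2) (Fin 2 × Fin 2) ℂ) (d h : (Fin 2 × Fin 2) → ℝ) :
    (Matrix.trace (U * Matrix.diagonal (fun p => (d p : ℂ)) * star U *
        Matrix.diagonal (fun p => (h p : ℂ)))).re
      = ∑ p, ∑ q, h p * d q * Complex.normSq (U p q) := by
  rw [trace_expand]
  rw [Complex.re_sum]
  apply Finset.sum_congr rfl; intro p _
  rw [Complex.re_sum]
  apply Finset.sum_congr rfl; intro q _
  rw [Complex.star_def, Complex.mul_conj]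
  push_cast
  simp

/-- SWAP is an optimal heat engine on a hot and a cold two-level system with
`E_A > E_B > 0` and `E_A/T_A < E_B/T_B`: every `4×4` unitary `U` satisfies
`tr(U ρ U† H) ≥ tr(S ρ S† H)`. -/
theorem stmt_8 (E_A E_B T_A T_B : ℝ) (hEB : 0 < E_B) (hE : E_B < E_A)
    (hTA : 0 < T_A) (hTB : 0 < T_B) (hratio : E_A / T_A < E_B / T_B) :
    ∀ U ∈ Matrix.unitaryGroup (Fin 2 × Fin 2) ℂ,
      (Matrix.trace (swapGate * (qubitGibbs E_A T_A ⊗ₖ qubitGibbs E_B T_B) *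
          star swapGate *
          (qubitHam E_A ⊗ₖ (1 : Matrix (Fin 2) (Fin 2) ℂ) +
            (1 : Matrix (Fin 2) (Fin 2) ℂ) ⊗ₖ qubitHam E_B))).re ≤
      (Matrix.trace (U * (qubitGibbs E_A T_A ⊗ₖ qubitGibbs E_B T_B) * star U *
          (qubitHam E_A ⊗ₖ (1 : Matrix (Fin 2) (Fin 2) ℂ) +
            (1 : Matrix (Fin 2) (Fin 2) ℂ) ⊗ₖ qubitHam E_B))).re := by
  intro U hU
  have hy : 0 < Real.exp (-E_B / T_B) := Real.exp_pos _
  have hx1 : Real.exp (-E_A / T_A) < 1 := by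
    rw [Real.exp_lt_one_iff, neg_div]
    have : 0 < E_A / T_A := div_pos (hEB.trans hE) hTA
    linarith
  have hyx : Real.exp (-E_B / T_B) < Real.exp (-E_A / T_A) := by
    apply Real.exp_lt_exp.2
    rw [neg_div, neg_div]
    linarith
  have hρ : qubitGibbs E_A T_A ⊗ₖ qubitGibbs E_B T_B =
      Matrix.diagonal (fun p : Fin 2 × Fin 2 =>
        ((((if p.1 = 0 then 1 else Real.exp (-E_A / T_A)) / (1 + Real.exp (-E_A / T_A))) *
          ((if p.2 = 0 then 1 else Real.exp (-E_B / T_B)) / (1 + Real.exp (-E_B / T_B))) : ℝ) : ℂ)) := by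
    rw [qubitGibbs, qubitGibbs, Matrix.diagonal_kronecker_diagonal]
    refine congrArg Matrix.diagonal (funext fun p => ?_)
    exact (Complex.ofReal_mul _ _).symm
  have hH : qubitHam E_A ⊗ₖ (1 : Matrix (Fin 2) (Fin 2) ℂ) +
      (1 : Matrix (Fin 2) (Fin 2) ℂ) ⊗ₖ qubitHam E_B =
      Matrix.diagonal (fun p : Fin 2 × Fin 2 =>
        (((if p.1 = 0 then 0 else E_A) + (if p.2 = 0 then 0 else E_B) : ℝ) : ℂ)) := by
    rw [qubitHam, qubitHam, ← Matrix.diagonal_one, Matrix.diagonal_kronecker_diagonal,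
      Matrix.diagonal_kronecker_diagonal]
    ext p q
    by_cases h : p = q <;> simp [Matrix.diagonal_apply, h, apply_ite ((↑·) : ℝ → ℂ)]
  rw [hρ, hH,
    re_trace swapGate
      (fun p : Fin 2 × Fin 2 => ((if p.1 = 0 then 1 else Real.exp (-E_A / T_A)) / (1 + Real.exp (-E_A / T_A))) *
        ((if p.2 = 0 then 1 else Real.exp (-E_B / T_B)) / (1 + Real.exp (-E_B / T_B))))
      (fun p : Fin 2 × Fin 2 => (if p.1 = 0 then 0 else E_A) + (if p.2 = 0 then 0 else E_B)),
    re_trace U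
      (fun p : Fin 2 × Fin 2 => ((if p.1 = 0 then 1 else Real.exp (-E_A / T_A)) / (1 + Real.exp (-E_A / T_A))) *
        ((if p.2 = 0 then 1 else Real.exp (-E_B / T_B)) / (1 + Real.exp (-E_B / T_B))))
      (fun p : Fin 2 × Fin 2 => (if p.1 = 0 then 0 else E_A) + (if p.2 = 0 then 0 else E_B))]
  have h1 := Matrix.mem_unitaryGroup_iff.mp hU
  have h2 := Matrix.mem_unitaryGroup_iff'.mp hU
  have hrow : ∀ p : Fin 2 × Fin 2,
      Complex.normSq (U p (0,0)) + Complex.normSq (U p (0,1)) +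
        Complex.normSq (U p (1,0)) + Complex.normSq (U p (1,1)) = 1 := by
    intro p
    have h3 : (U * star U) p p = 1 := by rw [h1]; simp [Matrix.one_apply]
    rw [Matrix.mul_apply] at h3
    simp only [Matrix.star_apply, Complex.star_def, Complex.mul_conj,
      Fintype.sum_prod_type, Fin.sum_univ_two] at h3
    have h5 : Complex.normSq (U p (0,0)) + Complex.normSq (U p (0,1)) +
        (Complex.normSq (U p (1,0)) + Complex.normSq (U p (1,1))) = 1 := by exact_mod_cast h3
    linarith
  have hcol : ∀ q : Fin 2 × Fin 2,
      Complex.normSq (U (0,0) q) + Complex.normSq (U (0,1) q) +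
        Complex.normSq (U (1,0) q) + Complex.normSq (U (1,1) q) = 1 := by
    intro q
    have h3 : (star U * U) q q = 1 := by rw [h2]; simp [Matrix.one_apply]
    rw [Matrix.mul_apply] at h3
    simp only [Matrix.star_apply, Complex.star_def, Fintype.sum_prod_type,
      Fin.sum_univ_two] at h3
    have h4 : ∀ z : ℂ, (starRingEnd ℂ) z * z = (Complex.normSq z : ℂ) := fun z => by
      rw [mul_comm, Complex.mul_conj]
    rw [h4, h4, h4, h4] at h3
    have h5 : Complex.normSq (U (0,0) q) + Complex.normSq (U (0,1) q) +
        (Complex.normSq (U (1,0) q) + Complex.normSq (U (1,1) q)) = 1 := by exact_mod_cast h3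
    linarith
  have hkey := key (Real.exp (-E_A / T_A)) (Real.exp (-E_B / T_B)) E_A E_B hy hyx hx1 hEB hE
    (fun p q => Complex.normSq (U p q)) (fun p q => Complex.normSq_nonneg _)
    hrow hcol
  have hc : (0:ℝ) < (1 + Real.exp (-E_A / T_A))⁻¹ * (1 + Real.exp (-E_B / T_B))⁻¹ := by positivity
  simp only [Fintype.sum_prod_type, Fin.sum_univ_two] at hkey ⊢
  norm_num [swapGate, apply_ite Complex.normSq] at hkey ⊢
  have hfin := mul_le_mul_of_nonneg_left hkey hc.le
  ring_nf at hfin ⊢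
  linarith [hfin]
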